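/- arXiv:2401.15905 — 3 statements merged into one kernel-verified Lean document; each statement's English description precedes it below -/
import Mathlib

section
/- Let X be an irreducible recurrent Markov chain on a countable set S with transition matrix P, K ⊆ A ⊆ S finite, A' = A \ K, T = inf{n ≥ 0 : X_n ∈ A^c}, T_K = inf{n ≥ 1 : X_n ∈ K}. Suppose condition A1(q) holds with Lyapunov function v : S → ℝ₊ and constant c. Then (P_{13}v_3)(x) < ∞ for every x ∈ K and (P_{23}v_3)(x) < ∞ for every x ∈ A', and 𝔼_x[v(X_T) I(T < T_K)] = (P_{13}v_3)(x) + (P_{12}(I − P_{22})^{-1}P_{23}v_3)(x) for x ∈ K, while 𝔼_x[v(X_T) I(T < T_K)] = ((I − P_{22})^{-1}P_{23}v_3)(x) for x ∈ A'. -/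
open MeasureTheory ENNReal Filter

set_option autoImplicit false

noncomputable section

/-- `n`-step transition probabilities of a transition matrix `P`. -/
def mstep {S : Type*} [DecidableEq S] (P : S → S → ℝ) : ℕ → S → S → ℝ
  | 0 => fun x y => if x = y then (1 : ℝ) else 0
  | (n + 1) => fun x y => ∑' z : S, mstep P n x z * P z y

/-- A Markov chain on a state space `S`: a stochastic transition matrix together
with the family of path-space laws `μ x` (law of the chain started at `x`),
characterized by its finite-dimensional distributions. -/
structure MC (S : Type*) [DecidableEq S] [MeasurableSpace S] where
  P : S → S → ℝ
  μ : S → Measure (ℕ → S)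
  prob : ∀ x, IsProbabilityMeasure (μ x)
  nonneg : ∀ x y, 0 ≤ P x y
  rowsum : ∀ x, HasSum (P x) 1
  fdd : ∀ (x : S) (n : ℕ) (γ : ℕ → S),
      μ x {ω | ∀ i ≤ n, ω i = γ i}
        = if γ 0 = x then ∏ i ∈ Finset.range n, ENNReal.ofReal (P (γ i) (γ (i + 1))) else 0

variable {S : Type*} [DecidableEq S] [MeasurableSpace S]

def MC.Irreducible (X : MC S) : Prop :=
  ∀ x y : S, ∃ n : ℕ, 0 < mstep X.P n x y

def MC.Recurrent (X : MC S) : Prop :=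
  ∀ x : S, X.μ x {ω | ∃ n : ℕ, 1 ≤ n ∧ ω n = x} = 1

/-- first time `n ≥ m` at which the path is in `B` (`⊤` if there is none). -/
def hit (m : ℕ) (B : Set S) (ω : ℕ → S) : ℕ∞ :=
  sInf {t : ℕ∞ | ∃ n : ℕ, t = (n : ℕ∞) ∧ m ≤ n ∧ ω n ∈ B}

/-- the path evaluated at an extended time (junk value at `⊤`). -/
def evalAt (ω : ℕ → S) (t : ℕ∞) : S := ω t.toNat

/-- `Σ_{j=0}^{τ(ω)-1} q(ω_j)` as an extended real. -/
def pathReward (q : S → ℝ) (τ : (ℕ → S) → ℕ∞) (ω : ℕ → S) : ℝ≥0∞ :=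
  ∑' j : ℕ, if (j : ℕ∞) < τ ω then ENNReal.ofReal (q (ω j)) else 0

/-- `𝔼_x Σ_{j=0}^{τ-1} q(X_j)`. -/
def MC.ER (X : MC S) (x : S) (q : S → ℝ) (τ : (ℕ → S) → ℕ∞) : ℝ≥0∞ :=
  ∫⁻ ω, pathReward q τ ω ∂ X.μ x

/-- Condition A1(q): `v` is a nonnegative Lyapunov function satisfying
`(Pv)(x) ≤ v(x) - q(x) + c·I(x ∈ K)` (with `Pv` an absolutely convergent sum). -/
def MC.A1 (X : MC S) (K : Set S) (q v : S → ℝ) (c : ℝ) : Prop :=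
  (∀ x, 0 ≤ v x) ∧ (∀ x : S, Summable fun y => X.P x y * v y) ∧
    ∀ x : S, (∑' y : S, X.P x y * v y) ≤ v x - q x + K.indicator (fun _ => c) x

/-- `T = inf{n ≥ 0 : X_n ∈ Aᶜ}`. -/
def TA (A : Finset S) (ω : ℕ → S) : ℕ∞ := hit 0 ((A : Set S))ᶜ ω

/-- `T_K = inf{n ≥ 1 : X_n ∈ K}`. -/
def TKt (K : Finset S) (ω : ℕ → S) : ℕ∞ := hit 1 (K : Set S) ω

/-- `τ(z) = inf{n ≥ 1 : X_n = z}`. -/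
def tauz (z : S) (ω : ℕ → S) : ℕ∞ := hit 1 {z} ω

/-- `ψ(z) = inf{n ≥ 0 : X_n = z}`. -/
def psiz (z : S) (ω : ℕ → S) : ℕ∞ := hit 0 {z} ω

/-- sub-block of a transition matrix. -/
def blk (P : S → S → ℝ) (F G : Finset S) : Matrix ↥F ↥G ℝ :=
  Matrix.of fun x y => P x.1 y.1

/-- `G(x,y) = ℙ_x(X_{T_K} = y, T_K < T)` for `x, y ∈ K̃ = K \ {z}`. -/
def Gmat (X : MC S) (K A : Finset S) (z : S) :
    Matrix ↥(K.erase z) ↥(K.erase z) ℝ :=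
  Matrix.of fun x y =>
    (X.μ x.1 {ω | TKt K ω < TA A ω ∧ evalAt ω (TKt K ω) = y.1}).toReal

/-- `ξ(x) = ℙ_x(T < T_K)`. -/
def xiFun (X : MC S) (K A : Finset S) (x : S) : ℝ :=
  (X.μ x {ω | TA A ω < TKt K ω}).toReal

/-- `k(x,q) = 𝔼_x Σ_{j=0}^{(T_K ∧ T)-1} q(X_j)`. -/
def kFun (X : MC S) (K A : Finset S) (q : S → ℝ) (x : S) : ℝ :=
  (X.ER x q fun ω => min (TKt K ω) (TA A ω)).toReal

/-- `k̃'(x,q) = 𝔼_x[v(X_T); T < T_K]`. -/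
def kpFun (X : MC S) (K A : Finset S) (v : S → ℝ) (x : S) : ℝ :=
  (∫⁻ ω, (if TA A ω < TKt K ω then ENNReal.ofReal (v (evalAt ω (TA A ω))) else 0)
      ∂ X.μ x).toReal

/-- `β(x,q) = k(x,q) + k̃'(x,q)`. -/
def betaFun (X : MC S) (K A : Finset S) (q v : S → ℝ) (x : S) : ℝ :=
  kFun X K A q x + kpFun X K A v x

def xiVec (X : MC S) (K A : Finset S) (z : S) : ↥(K.erase z) → ℝ :=
  fun x => xiFun X K A x.1

/-- the norm condition `‖(I-G)⁻¹ ξ‖_K̃ < 1`. -/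
def normCond (X : MC S) (K A : Finset S) (z : S) : Prop :=
  ‖(1 - Gmat X K A z)⁻¹.mulVec (xiVec X K A z)‖ < 1

/-- `κ̰(·,q) = (I-G)⁻¹ k(q)` on `K̃`. -/
def kappaLoK (X : MC S) (K A : Finset S) (z : S) (q : S → ℝ) : ↥(K.erase z) → ℝ :=
  (1 - Gmat X K A z)⁻¹.mulVec fun y => kFun X K A q y.1

/-- `κ̃(·,q)` on `K̃`. -/
def kappaHiK (X : MC S) (K A : Finset S) (z : S) (q v : S → ℝ) : ↥(K.erase z) → ℝ :=
  (1 - Gmat X K A z)⁻¹.mulVec (fun y => betaFun X K A q v y.1)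
    + (‖(1 - Gmat X K A z)⁻¹.mulVec (fun y => betaFun X K A q v y.1)‖
        / (1 - ‖(1 - Gmat X K A z)⁻¹.mulVec (xiVec X K A z)‖))
      • (1 - Gmat X K A z)⁻¹.mulVec (xiVec X K A z)

/-- the matrix `(I - P₂₂)⁻¹ P₂₁`. -/
def WAK (X : MC S) (K A : Finset S) : Matrix ↥(A \ K) ↥K ℝ :=
  (1 - blk X.P (A \ K) (A \ K))⁻¹ * blk X.P (A \ K) K

/-- `κ̰(·,q)` on `A \ {z}` (extended by `0` off `A \ {z}`). -/
def kappaLo (X : MC S) (K A : Finset S) (z : S) (q : S → ℝ) (x : S) : ℝ :=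
  if hx : x ∈ K.erase z then kappaLoK X K A z q ⟨x, hx⟩
  else if hx' : x ∈ A \ K then
    kFun X K A q x + ∑ y : ↥(K.erase z),
      WAK X K A ⟨x, hx'⟩ ⟨y.1, Finset.mem_of_mem_erase y.2⟩ * kappaLoK X K A z q y
  else 0

/-- `κ̃(·,q)` on `A \ {z}` (extended by `0` off `A \ {z}`). -/
def kappaHi (X : MC S) (K A : Finset S) (z : S) (q v : S → ℝ) (x : S) : ℝ :=
  if hx : x ∈ K.erase z then kappaHiK X K A z q v ⟨x, hx⟩
  else if hx' : x ∈ A \ K then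
    betaFun X K A q v x
      + (∑ y : ↥(K.erase z),
          WAK X K A ⟨x, hx'⟩ ⟨y.1, Finset.mem_of_mem_erase y.2⟩ * kappaHiK X K A z q v y)
      + xiFun X K A x * ‖kappaHiK X K A z q v‖
  else 0

/-- `κ̰(z,q)`, the one-step extension of the lower bound at `z`. -/
def kappaLoZ (X : MC S) (K A : Finset S) (z : S) (q : S → ℝ) : ℝ :=
  q z + ∑ y ∈ A.erase z, X.P z y * kappaLo X K A z q y

/-- `κ̃(z,q)`, the one-step extension of the upper bound at `z`. -/
def kappaHiZ (X : MC S) (K A : Finset S) (z : S) (q v : S → ℝ) : ℝ :=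
  q z + (∑ y ∈ A.erase z, X.P z y * kappaHi X K A z q v y)
    + ∑' y : {y : S // y ∉ A}, X.P z y.1 * (v y.1 + ‖kappaHiK X K A z q v‖)

/-! ### Auxiliary development -/

section Aux
set_option linter.unusedSectionVars false

lemma hit_le' {m n : ℕ} {B : Set S} {ω : ℕ → S} (hmn : m ≤ n) (hB : ω n ∈ B) :
    hit m B ω ≤ (n : ℕ∞) :=
  sInf_le ⟨n, rfl, hmn, hB⟩

lemma lt_hit' {m n : ℕ} {B : Set S} {ω : ℕ → S} (h : ∀ k, m ≤ k → k ≤ n → ω k ∉ B) :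
    (n : ℕ∞) < hit m B ω := by
  have h1 : ((n : ℕ∞) + 1) ≤ hit m B ω := by
    apply le_sInf
    rintro t ⟨k, rfl, hk, hkB⟩
    have hnk : n < k := by
      by_contra hc
      exact h k hk (not_lt.1 hc) hkB
    have : ((n + 1 : ℕ) : ℕ∞) ≤ (k : ℕ∞) := by exact_mod_cast Nat.succ_le_of_lt hnk
    simpa using this
  have h0 : (n : ℕ∞) < ((n + 1 : ℕ) : ℕ∞) := by exact_mod_cast Nat.lt_succ_self n
  exact lt_of_lt_of_le h0 (by simpa using h1)

lemma hit_eq_top' {m : ℕ} {B : Set S} {ω : ℕ → S} (h : ∀ k, m ≤ k → ω k ∉ B) :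
    hit m B ω = ⊤ := by
  have : {t : ℕ∞ | ∃ n : ℕ, t = (n : ℕ∞) ∧ m ≤ n ∧ ω n ∈ B} = ∅ := by
    ext t
    simp only [Set.mem_setOf_eq, Set.mem_empty_iff_false, iff_false]
    rintro ⟨k, rfl, hk, hB⟩
    exact h k hk hB
  rw [hit, this, sInf_empty]

lemma hit_spec' {m N : ℕ} {B : Set S} {ω : ℕ → S} (h : hit m B ω = (N : ℕ∞)) :
    m ≤ N ∧ ω N ∈ B ∧ ∀ k, m ≤ k → k < N → ω k ∉ B := by
  classical
  by_cases hex : ∃ k, m ≤ k ∧ ω k ∈ B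
  · have hfind := Nat.find_spec hex
    have heq : hit m B ω = ((Nat.find hex : ℕ) : ℕ∞) := by
      apply le_antisymm
      · exact hit_le' hfind.1 hfind.2
      · apply le_sInf
        rintro t ⟨k, rfl, hk, hkB⟩
        have : Nat.find hex ≤ k := Nat.find_le ⟨hk, hkB⟩
        exact_mod_cast this
    have hNfind : N = Nat.find hex := by
      rw [h] at heq
      exact_mod_cast heq
    subst hNfind
    refine ⟨hfind.1, hfind.2, fun k hmk hkN hkB => ?_⟩
    exact Nat.find_min hex hkN ⟨hmk, hkB⟩
  · push_neg at hex
    have := hit_eq_top' (fun k hk => hex k hk)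
    rw [h] at this
    simp at this

/-- the sequence determined by a start point and a finite vector of next values. -/
def seqOf (x : S) {n : ℕ} (c : Fin n → S) : ℕ → S :=
  fun j => if h : 0 < j ∧ j - 1 < n then c ⟨j - 1, h.2⟩ else x

@[simp] lemma seqOf_zero (x : S) {n : ℕ} (c : Fin n → S) : seqOf x c 0 = x := by
  simp [seqOf]

lemma seqOf_succ (x : S) {n : ℕ} (c : Fin n → S) {j : ℕ} (hj : j < n) :
    seqOf x c (j + 1) = c ⟨j, hj⟩ := by
  simp [seqOf, hj]

/-- cylinder set. -/
def cylSet (x : S) {n : ℕ} (c : Fin n → S) : Set (ℕ → S) :=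
  {ω | ω 0 = x ∧ ∀ i : Fin n, ω (i.1 + 1) = c i}

lemma measurableSet_cylSet [MeasurableSingletonClass S] (x : S) {n : ℕ} (c : Fin n → S) :
    MeasurableSet (cylSet x c) := by
  have : cylSet x c
      = (fun ω : ℕ → S => ω 0) ⁻¹' {x} ∩ ⋂ i : Fin n, (fun ω : ℕ → S => ω (i.1 + 1)) ⁻¹' {c i} := by
    ext ω
    simp [cylSet, Set.mem_iInter]
  rw [this]
  exact ((measurable_pi_apply 0) (MeasurableSet.singleton x)).inter
    (MeasurableSet.iInter fun i => (measurable_pi_apply _) (MeasurableSet.singleton (c i)))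

lemma cylSet_eq (x : S) {n : ℕ} (c : Fin n → S) :
    cylSet x c = {ω : ℕ → S | ∀ i ≤ n, ω i = seqOf x c i} := by
  ext ω
  constructor
  · rintro ⟨h0, hs⟩ i hi
    match i, hi with
    | 0, _ => simpa using h0
    | (j+1), hj =>
      have hjn : j < n := by omega
      rw [seqOf_succ x c hjn]
      exact hs ⟨j, hjn⟩
  · intro h
    refine ⟨by simpa using h 0 (Nat.zero_le n), fun i => ?_⟩
    have := h (i.1 + 1) (by omega)
    rwa [seqOf_succ x c i.2, Fin.eta] at this

lemma cyl_measure (X : MC S) (x : S) {n : ℕ} (c : Fin n → S) :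
    X.μ x (cylSet x c)
      = ∏ i ∈ Finset.range n, ENNReal.ofReal (X.P (seqOf x c i) (seqOf x c (i + 1))) := by
  rw [cylSet_eq, X.fdd x n (seqOf x c), if_pos (seqOf_zero x c)]

/-- the good-path predicate: interior in `A \ K`, endpoint outside `A`. -/
def goodPath (K A : Finset S) {n : ℕ} (c : Fin (n + 1) → S) : Prop :=
  (∀ i : Fin (n + 1), i.1 < n → c i ∈ A \ K) ∧ c (Fin.last n) ∉ A

instance (K A : Finset S) {n : ℕ} (c : Fin (n + 1) → S) : Decidable (goodPath K A c) := by
  unfold goodPath; infer_instance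

/-- one summand of the cylinder decomposition. -/
def Fp (v : S → ℝ) (K A : Finset S) (x : S) (p : Σ n : ℕ, (Fin (n + 1) → S)) :
    (ℕ → S) → ℝ≥0∞ :=
  (cylSet x p.2).indicator
    (fun _ => if goodPath K A p.2 then ENNReal.ofReal (v (p.2 (Fin.last p.1))) else 0)

lemma good_mem_spec {K A : Finset S} (hKA : K ⊆ A) {x : S} (hxA : x ∈ A)
    {n : ℕ} {c : Fin (n + 1) → S} (hg : goodPath K A c) {ω : ℕ → S}
    (hω : ω ∈ cylSet x c) :
    TA A ω = ((n + 1 : ℕ) : ℕ∞) ∧ ((n + 1 : ℕ) : ℕ∞) < TKt K ω := by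
  obtain ⟨h0, hs⟩ := hω
  have hmem : ∀ k, 1 ≤ k → k ≤ n → ω k ∈ A ∧ ω k ∉ K := by
    intro k hk1 hkn
    obtain ⟨j, rfl⟩ : ∃ j, k = j + 1 := ⟨k - 1, by omega⟩
    have hjn : j < n + 1 := by omega
    have hc := hg.1 ⟨j, hjn⟩ (show j < n by omega)
    rw [Finset.mem_sdiff] at hc
    have hω' : ω (j + 1) = c ⟨j, hjn⟩ := hs ⟨j, hjn⟩
    rw [hω']
    exact hc
  have hlast : ω (n + 1) ∉ A := by
    have hω' : ω (n + 1) = c (Fin.last n) := hs (Fin.last n)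
    rw [hω']
    exact hg.2
  have hinA : ∀ k, k ≤ n → ω k ∈ A := by
    intro k hk
    rcases Nat.eq_zero_or_pos k with rfl | hk1
    · rwa [h0]
    · exact (hmem k hk1 hk).1
  have hTA : TA A ω = ((n + 1 : ℕ) : ℕ∞) := by
    apply le_antisymm
    · exact hit_le' (Nat.zero_le _) (by simpa using hlast)
    · have hlt : ((n : ℕ) : ℕ∞) < TA A ω := by
        apply lt_hit'
        intro k _ hkn
        simpa using hinA k hkn
      have := Order.add_one_le_of_lt hlt
      simpa [Nat.cast_add] using this
  refine ⟨hTA, ?_⟩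
  apply lt_hit'
  intro k hk1 hkn1
  rcases Nat.lt_or_ge k (n + 1) with hk | hk
  · have := (hmem k hk1 (by omega)).2
    simpa using this
  · have hkeq : k = n + 1 := by omega
    subst hkeq
    intro hK
    exact hlast (hKA hK)

lemma pointwise_decomp {K A : Finset S} (hKA : K ⊆ A) (v : S → ℝ)
    {x : S} (hxA : x ∈ A) {ω : ℕ → S} (hω0 : ω 0 = x) :
    (if TA A ω < TKt K ω then ENNReal.ofReal (v (evalAt ω (TA A ω))) else 0)
      = ∑' p : Σ n : ℕ, (Fin (n + 1) → S), Fp v K A x p ω := by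
  by_cases h : TA A ω < TKt K ω
  · -- extract the hitting time
    have hne : TA A ω ≠ ⊤ := (lt_of_lt_of_le h le_top).ne
    obtain ⟨N, hN⟩ : ∃ N : ℕ, TA A ω = (N : ℕ∞) := by
      lift TA A ω to ℕ using hne with N
      exact ⟨N, rfl⟩
    obtain ⟨-, hNA, hltA⟩ := hit_spec' hN
    have hN0 : N ≠ 0 := by
      intro h0
      subst h0
      rw [hω0] at hNA
      exact hNA (by simpa using hxA)
    obtain ⟨n, rfl⟩ : ∃ n, N = n + 1 := ⟨N - 1, by omega⟩
    have hKnot : ∀ k, 1 ≤ k → k ≤ n + 1 → ω k ∉ K := by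
      intro k hk1 hkn hkK
      have h1 : TKt K ω ≤ (k : ℕ∞) := hit_le' hk1 (by simpa using hkK)
      have h2 : (k : ℕ∞) ≤ ((n + 1 : ℕ) : ℕ∞) := by exact_mod_cast hkn
      rw [← hN] at h2
      exact absurd (lt_of_lt_of_le h (h1.trans h2)) (lt_irrefl _)
    have hcyl : ω ∈ cylSet x (fun i : Fin (n + 1) => ω (i.1 + 1)) := ⟨hω0, fun i => rfl⟩
    have hgood : goodPath K A (fun i : Fin (n + 1) => ω (i.1 + 1)) := by
      constructor
      · intro i hi
        rw [Finset.mem_sdiff]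
        constructor
        · by_contra hA'
          exact hltA (i.1 + 1) (Nat.zero_le _) (by omega) (by simpa using hA')
        · exact hKnot (i.1 + 1) (by omega) (by omega)
      · simpa using hNA
    rw [tsum_eq_single (⟨n, fun i : Fin (n + 1) => ω (i.1 + 1)⟩ : Σ n : ℕ, (Fin (n + 1) → S)) ?_]
    · rw [if_pos h, Fp, Set.indicator_of_mem hcyl, if_pos hgood, hN]
      rfl
    · rintro ⟨m, d⟩ hne'
      by_contra hF
      have hmem : ω ∈ cylSet x d ∧ goodPath K A d := by
        rw [Fp] at hF
        by_cases hc : ω ∈ cylSet x d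
        · refine ⟨hc, ?_⟩
          by_contra hg
          rw [Set.indicator_of_mem hc, if_neg hg] at hF
          exact hF rfl
        · rw [Set.indicator_of_notMem hc] at hF
          exact absurd rfl hF
      obtain ⟨hTA', -⟩ := good_mem_spec hKA hxA hmem.2 hmem.1
      have hmn : n = m := by
        rw [hN] at hTA'
        have : n + 1 = m + 1 := by exact_mod_cast hTA'
        omega
      subst hmn
      apply hne'
      have hd : d = fun i : Fin (n + 1) => ω (i.1 + 1) := by
        funext i
        exact (hmem.1.2 i).symm
      rw [Sigma.mk.inj_iff]
      exact ⟨rfl, heq_of_eq hd⟩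
  · rw [if_neg h]
    symm
    rw [ENNReal.tsum_eq_zero]
    rintro ⟨m, d⟩
    rw [Fp]
    by_cases hc : ω ∈ cylSet x d
    · rw [Set.indicator_of_mem hc]
      rw [if_neg]
      intro hg
      obtain ⟨hTA', hTK'⟩ := good_mem_spec hKA hxA hg hc
      exact h (by rw [hTA']; exact hTK')
    · rw [Set.indicator_of_notMem hc]

lemma lintegral_decomp [Countable S] [MeasurableSingletonClass S] (X : MC S)
    {K A : Finset S} (hKA : K ⊆ A) (v : S → ℝ) {x : S} (hxA : x ∈ A) :
    (∫⁻ ω, (if TA A ω < TKt K ω then ENNReal.ofReal (v (evalAt ω (TA A ω))) else 0) ∂ X.μ x)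
      = ∑' p : Σ n : ℕ, (Fin (n + 1) → S),
          (if goodPath K A p.2 then ENNReal.ofReal (v (p.2 (Fin.last p.1))) else 0)
            * X.μ x (cylSet x p.2) := by
  haveI := X.prob x
  have hset : {ω : ℕ → S | ∀ i ≤ 0, ω i = x} = {ω : ℕ → S | ω 0 = x} := by
    ext ω
    simp [Nat.le_zero]
  have h1 : X.μ x {ω : ℕ → S | ω 0 = x} = 1 := by
    have := X.fdd x 0 (fun _ => x)
    rw [hset] at this
    simpa using this
  have hmeas : MeasurableSet {ω : ℕ → S | ω 0 = x} := by
    have : {ω : ℕ → S | ω 0 = x} = (fun ω : ℕ → S => ω 0) ⁻¹' {x} := rfl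
    rw [this]
    exact (measurable_pi_apply 0) (MeasurableSet.singleton x)
  have hae : ∀ᵐ ω ∂ X.μ x, ω 0 = x := by
    rw [ae_iff]
    have : {ω : ℕ → S | ¬ ω 0 = x} = {ω : ℕ → S | ω 0 = x}ᶜ := rfl
    rw [this, prob_compl_eq_zero_iff hmeas]
    exact h1
  have hcongr : (fun ω => if TA A ω < TKt K ω then ENNReal.ofReal (v (evalAt ω (TA A ω))) else 0)
      =ᵐ[X.μ x] fun ω => ∑' p : Σ n : ℕ, (Fin (n + 1) → S), Fp v K A x p ω := by
    filter_upwards [hae] with ω hω0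
    exact pointwise_decomp hKA v hxA hω0
  have hFmeas : ∀ p : Σ n : ℕ, (Fin (n + 1) → S), AEMeasurable (Fp v K A x p) (X.μ x) :=
    fun p => (measurable_const.indicator (measurableSet_cylSet x p.2)).aemeasurable
  rw [lintegral_congr_ae hcongr, lintegral_tsum hFmeas]
  congr 1
  funext p
  rw [Fp, lintegral_indicator_const (measurableSet_cylSet x p.2)]

/-- `Σ_{z ∉ A} P(y,z) v(z)` in `ℝ≥0∞`. -/
def Wfun (X : MC S) (v : S → ℝ) (A : Finset S) (y : S) : ℝ≥0∞ :=
  ∑' z : S, if z ∉ A then ENNReal.ofReal (X.P y z) * ENNReal.ofReal (v z) else 0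

/-- the `n`-th term of the first-exit decomposition. -/
def TT (X : MC S) (v : S → ℝ) (K A : Finset S) : ℕ → S → ℝ≥0∞
  | 0 => Wfun X v A
  | (n + 1) => fun x =>
      ∑' z : S, if z ∈ A \ K then ENNReal.ofReal (X.P x z) * TT X v K A n z else 0

/-- weight of one good path. -/
def pterm (X : MC S) (v : S → ℝ) (K A : Finset S) (x : S) {n : ℕ} (c : Fin (n + 1) → S) :
    ℝ≥0∞ :=
  (if goodPath K A c then ENNReal.ofReal (v (c (Fin.last n))) else 0)
    * ∏ i ∈ Finset.range (n + 1), ENNReal.ofReal (X.P (seqOf x c i) (seqOf x c (i + 1)))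

lemma seqOf_cons (x z : S) {n : ℕ} (d : Fin (n + 1) → S) {i : ℕ} (hi : i ≤ n + 1) :
    seqOf x (Fin.cons z d : Fin (n + 2) → S) (i + 1) = seqOf z d i := by
  rcases i with _ | j
  · have h1 := seqOf_succ x (Fin.cons z d : Fin (n + 2) → S) (show 0 < n + 2 by omega)
    rw [seqOf_zero]
    rw [show (⟨0, show 0 < n + 2 by omega⟩ : Fin (n + 2)) = 0 from Fin.mk_zero] at h1
    rw [Fin.cons_zero] at h1
    exact h1
  · have hj : j < n + 1 := by omega
    rw [seqOf_succ z d hj]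
    have hj2 : j + 1 < n + 2 := by omega
    rw [seqOf_succ x _ hj2]
    have : (⟨j + 1, hj2⟩ : Fin (n + 2)) = (⟨j, hj⟩ : Fin (n + 1)).succ := rfl
    rw [this, Fin.cons_succ]

lemma goodPath_cons (K A : Finset S) {n : ℕ} (z : S) (d : Fin (n + 1) → S) :
    goodPath K A (Fin.cons z d : Fin (n + 2) → S) ↔ (z ∈ A \ K ∧ goodPath K A d) := by
  constructor
  · rintro ⟨h1, h2⟩
    refine ⟨by simpa using h1 0 (Nat.succ_pos n), ⟨fun i hi => ?_, ?_⟩⟩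
    · have := h1 i.succ (by simpa using Nat.succ_lt_succ hi)
      simpa using this
    · rw [show Fin.last (n + 1) = (Fin.last n).succ from (Fin.succ_last n).symm,
        Fin.cons_succ] at h2
      exact h2
  · rintro ⟨hz, h1, h2⟩
    constructor
    · intro i
      induction i using Fin.cases with
      | zero => intro _; simpa using hz
      | succ j =>
        intro hj
        have hj' : j.1 < n := by simpa using hj
        simpa using h1 j hj'
    · rw [show Fin.last (n + 1) = (Fin.last n).succ from (Fin.succ_last n).symm, Fin.cons_succ]
      exact h2

lemma pathsum_eq (X : MC S) (v : S → ℝ) (K A : Finset S) :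
    ∀ (n : ℕ) (x : S), (∑' c : Fin (n + 1) → S, pterm X v K A x c) = TT X v K A n x := by
  intro n
  induction n with
  | zero =>
    intro x
    rw [show TT X v K A 0 x = Wfun X v A x from rfl, Wfun,
      ← Equiv.tsum_eq (Equiv.funUnique (Fin 1) S).symm]
    apply tsum_congr
    intro z
    have hc : ((Equiv.funUnique (Fin 1) S).symm z) = fun _ : Fin 1 => z := rfl
    rw [hc, pterm]
    have h1 : seqOf x (fun _ : Fin 1 => z) 1 = z := seqOf_succ x _ (by omega)
    have hg : goodPath K A (fun _ : Fin 1 => z) ↔ z ∉ A := by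
      unfold goodPath
      simp
    by_cases hz : z ∉ A
    · rw [if_pos (hg.2 hz), if_pos hz, Finset.prod_range_one, seqOf_zero, h1]
      ring
    · rw [if_neg (fun hgg => hz (hg.1 hgg)), if_neg hz, zero_mul]
  | succ n IH =>
    intro x
    rw [show TT X v K A (n + 1) x
        = ∑' z : S, (if z ∈ A \ K then ENNReal.ofReal (X.P x z) * TT X v K A n z else 0)
        from rfl]
    rw [← Equiv.tsum_eq (Fin.consEquiv fun _ : Fin (n + 2) => S), ENNReal.tsum_prod']
    apply tsum_congr
    intro z
    have hpt : ∀ d : Fin (n + 1) → S,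
        pterm X v K A x (Fin.cons z d)
          = (if z ∈ A \ K then ENNReal.ofReal (X.P x z) else 0) * pterm X v K A z d := by
      intro d
      rw [pterm, pterm]
      have hval : (Fin.cons z d : Fin (n + 2) → S) (Fin.last (n + 1)) = d (Fin.last n) := by
        rw [show Fin.last (n + 1) = (Fin.last n).succ from (Fin.succ_last n).symm, Fin.cons_succ]
      have hprod : (∏ i ∈ Finset.range (n + 2),
            ENNReal.ofReal (X.P (seqOf x (Fin.cons z d : Fin (n + 2) → S) i)
              (seqOf x (Fin.cons z d : Fin (n + 2) → S) (i + 1))))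
          = (∏ i ∈ Finset.range (n + 1),
              ENNReal.ofReal (X.P (seqOf z d i) (seqOf z d (i + 1))))
            * ENNReal.ofReal (X.P x z) := by
        rw [Finset.prod_range_succ' (fun i => ENNReal.ofReal
          (X.P (seqOf x (Fin.cons z d : Fin (n + 2) → S) i)
            (seqOf x (Fin.cons z d : Fin (n + 2) → S) (i + 1)))) (n + 1)]
        congr 1
        · apply Finset.prod_congr rfl
          intro i hi
          rw [Finset.mem_range] at hi
          rw [seqOf_cons x z d (by omega), seqOf_cons x z d (by omega)]
      rw [hval, hprod]
      by_cases hz : z ∈ A \ K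
      · by_cases hgd : goodPath K A d
        · rw [if_pos ((goodPath_cons K A z d).2 ⟨hz, hgd⟩), if_pos hz, if_pos hgd]
          ring
        · rw [if_neg (fun hh => hgd ((goodPath_cons K A z d).1 hh).2), if_pos hz, if_neg hgd]
          ring
      · rw [if_neg (fun hh => hz ((goodPath_cons K A z d).1 hh).1), if_neg hz, zero_mul, zero_mul]
    calc (∑' d : Fin (n + 1) → S, pterm X v K A x ((Fin.consEquiv fun _ : Fin (n + 2) => S) (z, d)))
        = ∑' d : Fin (n + 1) → S,
            (if z ∈ A \ K then ENNReal.ofReal (X.P x z) else 0) * pterm X v K A z d := by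
          apply tsum_congr
          intro d
          exact hpt d
      _ = (if z ∈ A \ K then ENNReal.ofReal (X.P x z) else 0) * TT X v K A n z := by
          rw [ENNReal.tsum_mul_left, IH z]
      _ = (if z ∈ A \ K then ENNReal.ofReal (X.P x z) * TT X v K A n z else 0) := by
          by_cases hz : z ∈ A \ K
          · rw [if_pos hz, if_pos hz]
          · rw [if_neg hz, if_neg hz, zero_mul]

lemma lintegral_eq_ttsum [Countable S] [MeasurableSingletonClass S] (X : MC S)
    {K A : Finset S} (hKA : K ⊆ A) (v : S → ℝ) {x : S} (hxA : x ∈ A) :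
    (∫⁻ ω, (if TA A ω < TKt K ω then ENNReal.ofReal (v (evalAt ω (TA A ω))) else 0) ∂ X.μ x)
      = ∑' n : ℕ, TT X v K A n x := by
  rw [lintegral_decomp X hKA v hxA]
  rw [ENNReal.tsum_sigma
    (fun (n : ℕ) (c : Fin (n + 1) → S) =>
      (if goodPath K A c then ENNReal.ofReal (v (c (Fin.last n))) else 0) * X.μ x (cylSet x c))]
  apply tsum_congr
  intro n
  rw [← pathsum_eq X v K A n x]
  apply tsum_congr
  intro c
  rw [pterm, cyl_measure]

/-- the real-valued version of `TT`. -/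
def uFun (X : MC S) (v : S → ℝ) (K A : Finset S) : ℕ → S → ℝ
  | 0 => fun x => ∑' y : {y : S // y ∉ A}, X.P x y.1 * v y.1
  | (n + 1) => fun x => ∑ z ∈ A \ K, X.P x z * uFun X v K A n z

lemma summable_sub (X : MC S) (A : Finset S) (v : S → ℝ)
    (hsum : ∀ x : S, Summable fun y => X.P x y * v y) (x : S) :
    Summable fun y : {y : S // y ∉ A} => X.P x y.1 * v y.1 :=
  (hsum x).subtype {y : S | y ∉ A}

lemma uFun_nonneg (X : MC S) (v : S → ℝ) (K A : Finset S) (hv : ∀ x, 0 ≤ v x) :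
    ∀ (n : ℕ) (x : S), 0 ≤ uFun X v K A n x := by
  intro n
  induction n with
  | zero =>
    intro x
    exact tsum_nonneg fun y => mul_nonneg (X.nonneg _ _) (hv _)
  | succ n IH =>
    intro x
    exact Finset.sum_nonneg fun z _ => mul_nonneg (X.nonneg _ _) (IH z)

lemma TT_eq_ofReal_u (X : MC S) (v : S → ℝ) (K A : Finset S) (hv : ∀ x, 0 ≤ v x)
    (hsum : ∀ x : S, Summable fun y => X.P x y * v y) :
    ∀ (n : ℕ) (x : S), TT X v K A n x = ENNReal.ofReal (uFun X v K A n x) := by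
  intro n
  induction n with
  | zero =>
    intro x
    rw [show TT X v K A 0 x = Wfun X v A x from rfl, Wfun,
      show uFun X v K A 0 x = ∑' y : {y : S // y ∉ A}, X.P x y.1 * v y.1 from rfl,
      ENNReal.ofReal_tsum_of_nonneg (fun y => mul_nonneg (X.nonneg _ _) (hv _))
        (summable_sub X A v hsum x)]
    have hsub : (∑' y : {y : S // y ∉ A}, ENNReal.ofReal (X.P x y.1 * v y.1))
        = ∑' z : S, Set.indicator {y : S | y ∉ A} (fun y => ENNReal.ofReal (X.P x y * v y)) z :=
      tsum_subtype {y : S | y ∉ A} (fun y => ENNReal.ofReal (X.P x y * v y))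
    rw [hsub]
    apply tsum_congr
    intro z
    by_cases hz : z ∉ A
    · rw [if_pos hz, Set.indicator_of_mem (show z ∈ {y : S | y ∉ A} from hz),
        ENNReal.ofReal_mul (X.nonneg x z)]
    · rw [if_neg hz, Set.indicator_of_notMem (show z ∉ {y : S | y ∉ A} from fun h => hz h)]
  | succ n IH =>
    intro x
    rw [show TT X v K A (n + 1) x
        = ∑' z : S, (if z ∈ A \ K then ENNReal.ofReal (X.P x z) * TT X v K A n z else 0)
        from rfl,
      tsum_eq_sum (s := A \ K) (fun b hb => if_neg hb),
      show uFun X v K A (n + 1) x = ∑ z ∈ A \ K, X.P x z * uFun X v K A n z from rfl,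
      ENNReal.ofReal_sum_of_nonneg
        (fun z _ => mul_nonneg (X.nonneg _ _) (uFun_nonneg X v K A hv n z))]
    apply Finset.sum_congr rfl
    intro z hz
    rw [if_pos hz, IH z, ENNReal.ofReal_mul (X.nonneg x z)]

lemma uFun_matrix (X : MC S) (v : S → ℝ) (K A : Finset S) :
    ∀ (n : ℕ) (x : ↥(A \ K)),
      uFun X v K A n x.1
        = ((blk X.P (A \ K) (A \ K)) ^ n).mulVec
            (fun w : ↥(A \ K) => ∑' y : {y : S // y ∉ A}, X.P w.1 y.1 * v y.1) x := by
  intro n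
  induction n with
  | zero =>
    intro x
    rw [pow_zero, Matrix.one_mulVec]
    rfl
  | succ n IH =>
    intro x
    have h1 : uFun X v K A (n + 1) x.1 = ∑ z ∈ A \ K, X.P x.1 z * uFun X v K A n z := rfl
    rw [h1, ← Finset.sum_coe_sort (A \ K) (fun z => X.P x.1 z * uFun X v K A n z)]
    have h2 : ∀ z : ↥(A \ K), X.P x.1 z.1 * uFun X v K A n z.1
        = blk X.P (A \ K) (A \ K) x z
          * (((blk X.P (A \ K) (A \ K)) ^ n).mulVec
              (fun w : ↥(A \ K) => ∑' y : {y : S // y ∉ A}, X.P w.1 y.1 * v y.1)) z := by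
      intro z
      rw [IH z]
      rfl
    rw [Finset.sum_congr rfl (fun z _ => h2 z)]
    rw [show (∑ z : ↥(A \ K), blk X.P (A \ K) (A \ K) x z
          * (((blk X.P (A \ K) (A \ K)) ^ n).mulVec
              (fun w : ↥(A \ K) => ∑' y : {y : S // y ∉ A}, X.P w.1 y.1 * v y.1)) z)
        = (blk X.P (A \ K) (A \ K)).mulVec
            (((blk X.P (A \ K) (A \ K)) ^ n).mulVec
              (fun w : ↥(A \ K) => ∑' y : {y : S // y ∉ A}, X.P w.1 y.1 * v y.1)) x from rfl,
      Matrix.mulVec_mulVec, ← pow_succ']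

lemma mstep_nonneg (X : MC S) : ∀ (n : ℕ) (x y : S), 0 ≤ mstep X.P n x y := by
  intro n
  induction n with
  | zero =>
    intro x y
    simp only [mstep]
    split <;> norm_num
  | succ n IH =>
    intro x y
    simp only [mstep]
    exact tsum_nonneg fun z => mul_nonneg (IH x z) (X.nonneg z y)

lemma mstep_path (X : MC S) : ∀ {n : ℕ} {x y : S}, 0 < mstep X.P n x y →
    ∃ z : ℕ → S, z 0 = x ∧ z n = y ∧ ∀ i, i < n → 0 < X.P (z i) (z (i + 1)) := by
  intro n
  induction n with
  | zero =>
    intro x y h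
    simp only [mstep] at h
    by_cases hxy : x = y
    · exact ⟨fun _ => x, rfl, hxy ▸ rfl, fun i hi => absurd hi (Nat.not_lt_zero i)⟩
    · rw [if_neg hxy] at h
      exact absurd h (lt_irrefl 0)
  | succ n IH =>
    intro x y h
    simp only [mstep] at h
    have hex : ∃ w, 0 < mstep X.P n x w * X.P w y := by
      by_contra hc
      push_neg at hc
      have hall : ∀ w, mstep X.P n x w * X.P w y = 0 := fun w =>
        le_antisymm (hc w) (mul_nonneg (mstep_nonneg X n x w) (X.nonneg w y))
      rw [tsum_congr hall, tsum_zero] at h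
      exact lt_irrefl 0 h
    obtain ⟨w, hw⟩ := hex
    have h1 : 0 < mstep X.P n x w := by
      rcases lt_or_eq_of_le (mstep_nonneg X n x w) with h1 | h1
      · exact h1
      · rw [← h1, zero_mul] at hw
        exact absurd hw (lt_irrefl 0)
    have h2 : 0 < X.P w y := by
      rcases lt_or_eq_of_le (X.nonneg w y) with h2 | h2
      · exact h2
      · rw [← h2, mul_zero] at hw
        exact absurd hw (lt_irrefl 0)
    obtain ⟨z, hz0, hzn, hzs⟩ := IH h1
    refine ⟨fun i => if i ≤ n then z i else y, by simpa using hz0, by simp, ?_⟩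
    intro i hi
    rcases Nat.lt_or_ge i n with hin | hin
    · have e1 : (if i ≤ n then z i else y) = z i := if_pos (by omega)
      have e2 : (if i + 1 ≤ n then z (i + 1) else y) = z (i + 1) := if_pos (by omega)
      show 0 < X.P (if i ≤ n then z i else y) (if i + 1 ≤ n then z (i + 1) else y)
      rw [e1, e2]
      exact hzs i hin
    · have hieq : i = n := by omega
      subst hieq
      have e1 : (if i ≤ i then z i else y) = z i := if_pos le_rfl
      have e2 : (if i + 1 ≤ i then z (i + 1) else y) = y := if_neg (by omega)
      show 0 < X.P (if i ≤ i then z i else y) (if i + 1 ≤ i then z (i + 1) else y)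
      rw [e1, e2, hzn]
      exact h2

/-- restriction of `P` to `A \ K`. -/
def Rm (X : MC S) (K A : Finset S) : Matrix ↥(A \ K) ↥(A \ K) ℝ := blk X.P (A \ K) (A \ K)

lemma Rm_pow_nonneg (X : MC S) (K A : Finset S) :
    ∀ (n : ℕ) (i j : ↥(A \ K)), 0 ≤ (Rm X K A ^ n) i j := by
  intro n
  induction n with
  | zero =>
    intro i j
    rw [pow_zero, Matrix.one_apply]
    split <;> norm_num
  | succ n IH =>
    intro i j
    rw [pow_succ, Matrix.mul_apply]
    exact Finset.sum_nonneg fun k _ => mul_nonneg (IH i k) (X.nonneg _ _)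

/-- row sums of powers of `Rm`. -/
def rho (X : MC S) (K A : Finset S) (n : ℕ) (i : ↥(A \ K)) : ℝ :=
  ∑ j : ↥(A \ K), (Rm X K A ^ n) i j

lemma rho_nonneg (X : MC S) (K A : Finset S) (n : ℕ) (i : ↥(A \ K)) :
    0 ≤ rho X K A n i :=
  Finset.sum_nonneg fun j _ => Rm_pow_nonneg X K A n i j

lemma rho_zero (X : MC S) (K A : Finset S) (i : ↥(A \ K)) : rho X K A 0 i = 1 := by
  simp [rho, Matrix.one_apply]

lemma row_le_one (X : MC S) (K A : Finset S) (i : ↥(A \ K)) :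
    ∑ j : ↥(A \ K), Rm X K A i j ≤ 1 := by
  have h1 : (∑ j : ↥(A \ K), Rm X K A i j) = ∑ z ∈ A \ K, X.P i.1 z :=
    Finset.sum_coe_sort (A \ K) (fun z => X.P i.1 z)
  rw [h1, ← (X.rowsum i.1).tsum_eq]
  exact Summable.sum_le_tsum _ (fun z _ => X.nonneg i.1 z) (X.rowsum i.1).summable

lemma rho_add (X : MC S) (K A : Finset S) (a b : ℕ) (i : ↥(A \ K)) :
    rho X K A (a + b) i = ∑ j : ↥(A \ K), (Rm X K A ^ a) i j * rho X K A b j := by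
  unfold rho
  rw [pow_add]
  simp only [Matrix.mul_apply]
  rw [Finset.sum_comm]
  exact Finset.sum_congr rfl fun j _ => (Finset.mul_sum _ _ _).symm

lemma rho_one_le (X : MC S) (K A : Finset S) (i : ↥(A \ K)) : rho X K A 1 i ≤ 1 := by
  unfold rho
  rw [pow_one]
  exact row_le_one X K A i

lemma rho_succ_le (X : MC S) (K A : Finset S) (n : ℕ) (i : ↥(A \ K)) :
    rho X K A (n + 1) i ≤ rho X K A n i := by
  rw [rho_add X K A n 1 i]
  calc (∑ j : ↥(A \ K), (Rm X K A ^ n) i j * rho X K A 1 j)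
      ≤ ∑ j : ↥(A \ K), (Rm X K A ^ n) i j * 1 :=
        Finset.sum_le_sum fun j _ =>
          mul_le_mul_of_nonneg_left (rho_one_le X K A j) (Rm_pow_nonneg X K A n i j)
    _ = rho X K A n i := by simp [rho]

lemma rho_antitone (X : MC S) (K A : Finset S) (i : ↥(A \ K)) :
    Antitone fun n => rho X K A n i :=
  antitone_nat_of_succ_le fun n => rho_succ_le X K A n i

lemma rho_le_one (X : MC S) (K A : Finset S) (n : ℕ) (i : ↥(A \ K)) :
    rho X K A n i ≤ 1 := by
  have := rho_antitone X K A i (Nat.zero_le n)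
  simpa [rho_zero] using this

lemma stay_le (X : MC S) (K A : Finset S) :
    ∀ (m : ℕ), 1 ≤ m → ∀ (z : ℕ → S) (hz0 : z 0 ∈ A \ K),
      (∀ i, i < m → z i ∈ A \ K) → z m ∉ A \ K →
      rho X K A m ⟨z 0, hz0⟩ ≤ 1 - ∏ i ∈ Finset.range m, X.P (z i) (z (i + 1)) := by
  intro m
  induction m with
  | zero => intro h; exact absurd h (by omega)
  | succ m IH =>
    intro _ z hz0 hin hout
    rcases Nat.eq_zero_or_pos m with rfl | hm1
    · -- base case : one step
      have hz1 : z 1 ∉ A \ K := hout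
      have h1 : rho X K A 1 ⟨z 0, hz0⟩ = ∑ w ∈ A \ K, X.P (z 0) w := by
        unfold rho
        rw [pow_one]
        exact Finset.sum_coe_sort (A \ K) (fun w => X.P (z 0) w)
      have h2 : (∑ w ∈ insert (z 1) (A \ K), X.P (z 0) w) ≤ 1 := by
        rw [← (X.rowsum (z 0)).tsum_eq]
        exact Summable.sum_le_tsum _ (fun w _ => X.nonneg _ _) (X.rowsum (z 0)).summable
      rw [Finset.sum_insert hz1] at h2
      rw [h1, Finset.prod_range_one]
      linarith
    · -- inductive step
      have hz1 : z 1 ∈ A \ K := hin 1 (by omega)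
      have hIH := IH hm1 (fun i => z (i + 1)) hz1 (fun i hi => hin (i + 1) (by omega)) hout
      set j1 : ↥(A \ K) := ⟨z 1, hz1⟩
      set ε : ℝ := ∏ i ∈ Finset.range m, X.P (z (i + 1)) (z (i + 1 + 1))
      have hε0 : 0 ≤ ε := Finset.prod_nonneg fun i _ => X.nonneg _ _
      have hre : rho X K A (1 + m) ⟨z 0, hz0⟩
          = ∑ j : ↥(A \ K), Rm X K A ⟨z 0, hz0⟩ j * rho X K A m j := by
        have := rho_add X K A 1 m ⟨z 0, hz0⟩
        simpa [pow_one] using this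
      have hsplit : (∑ j : ↥(A \ K), Rm X K A ⟨z 0, hz0⟩ j * rho X K A m j)
          = (∑ j ∈ Finset.univ.erase j1, Rm X K A ⟨z 0, hz0⟩ j * rho X K A m j)
            + Rm X K A ⟨z 0, hz0⟩ j1 * rho X K A m j1 :=
        (Finset.sum_erase_add _ _ (Finset.mem_univ j1)).symm
      have hb1 : (∑ j ∈ Finset.univ.erase j1, Rm X K A ⟨z 0, hz0⟩ j * rho X K A m j)
          ≤ ∑ j ∈ Finset.univ.erase j1, Rm X K A ⟨z 0, hz0⟩ j :=
        Finset.sum_le_sum fun j _ =>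
          mul_le_of_le_one_right (X.nonneg _ _) (rho_le_one X K A m j)
      have hb2 : Rm X K A ⟨z 0, hz0⟩ j1 * rho X K A m j1
          ≤ Rm X K A ⟨z 0, hz0⟩ j1 * (1 - ε) :=
        mul_le_mul_of_nonneg_left hIH (X.nonneg _ _)
      have hb3 : (∑ j ∈ Finset.univ.erase j1, Rm X K A ⟨z 0, hz0⟩ j)
            + Rm X K A ⟨z 0, hz0⟩ j1 ≤ 1 := by
        rw [Finset.sum_erase_add _ _ (Finset.mem_univ j1)]
        exact row_le_one X K A ⟨z 0, hz0⟩
      have hprod : (∏ i ∈ Finset.range (m + 1), X.P (z i) (z (i + 1)))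
          = ε * X.P (z 0) (z 1) := Finset.prod_range_succ' _ m
      have hgoal : rho X K A (m + 1) ⟨z 0, hz0⟩ ≤ 1 - X.P (z 0) (z 1) * ε := by
        have hm1' : m + 1 = 1 + m := by omega
        rw [hm1', hre, hsplit]
        have : Rm X K A ⟨z 0, hz0⟩ j1 = X.P (z 0) (z 1) := rfl
        nlinarith [X.nonneg (z 0) (z 1)]
      rw [hprod]
      linarith

lemma exit_lt_one (X : MC S) (K A : Finset S) (hirr : X.Irreducible)
    {y0 : S} (hy0 : y0 ∉ A) (i : ↥(A \ K)) :
    ∃ m, 1 ≤ m ∧ rho X K A m i < 1 := by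
  classical
  obtain ⟨n, hn⟩ := hirr i.1 y0
  obtain ⟨z, hz0, hzn, hzpos⟩ := mstep_path X hn
  have hex : ∃ j, z j ∉ A \ K := by
    refine ⟨n, ?_⟩
    rw [hzn]
    exact fun h => hy0 (Finset.mem_sdiff.1 h).1
  have hm_spec : z (Nat.find hex) ∉ A \ K := Nat.find_spec hex
  have hm_lt : ∀ j, j < Nat.find hex → z j ∈ A \ K := by
    intro j hj
    by_contra h
    exact (Nat.find_min hex hj) h
  have hz0' : z 0 ∈ A \ K := by
    rw [hz0]
    exact i.2
  have hm1 : 1 ≤ Nat.find hex := by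
    rcases Nat.eq_zero_or_pos (Nat.find hex) with h0 | h
    · rw [h0] at hm_spec
      exact absurd hz0' hm_spec
    · exact h
  have hmn : Nat.find hex ≤ n := Nat.find_le (by rw [hzn]; exact fun h => hy0 (Finset.mem_sdiff.1 h).1)
  have hpos : 0 < ∏ j ∈ Finset.range (Nat.find hex), X.P (z j) (z (j + 1)) :=
    Finset.prod_pos fun j hj => hzpos j (lt_of_lt_of_le (Finset.mem_range.1 hj) hmn)
  have hle := stay_le X K A (Nat.find hex) hm1 z hz0' hm_lt hm_spec
  refine ⟨Nat.find hex, hm1, ?_⟩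
  have hzi : (⟨z 0, hz0'⟩ : ↥(A \ K)) = i := Subtype.ext hz0
  rw [← hzi]
  linarith

lemma summable_pow_entry (X : MC S) (K A : Finset S) (hirr : X.Irreducible)
    (hy0 : ∃ y, y ∉ A) :
    ∀ i j : ↥(A \ K), Summable fun n => (Rm X K A ^ n) i j := by
  rcases isEmpty_or_nonempty ↥(A \ K) with hem | hne
  · exact fun i => (hem.false i).elim
  obtain ⟨y0, hy0⟩ := hy0
  choose mfun hm1 hmlt using fun i => exit_lt_one X K A hirr hy0 i
  classical
  set N := Finset.univ.sup mfun with hN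
  have hNlt : ∀ i, rho X K A N i < 1 := fun i =>
    lt_of_le_of_lt (rho_antitone X K A i (Finset.le_sup (Finset.mem_univ i))) (hmlt i)
  have hN1 : 1 ≤ N := le_trans (hm1 (Classical.arbitrary _))
    (Finset.le_sup (Finset.mem_univ _))
  set θ := Finset.univ.sup' Finset.univ_nonempty (rho X K A N) with hθdef
  have hθlt : θ < 1 := (Finset.sup'_lt_iff _).2 fun i _ => hNlt i
  have hθ : ∀ i, rho X K A N i ≤ θ := fun i => Finset.le_sup' _ (Finset.mem_univ i)
  have hθ0 : 0 ≤ θ := le_trans (rho_nonneg X K A N (Classical.arbitrary _))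
    (hθ (Classical.arbitrary _))
  have hkey : ∀ (k r : ℕ) (i : ↥(A \ K)), rho X K A (r + N * k) i ≤ θ ^ k := by
    intro k
    induction k with
    | zero =>
      intro r i
      simpa using rho_le_one X K A r i
    | succ k IH =>
      intro r i
      have heq : r + N * (k + 1) = (r + N * k) + N := by ring
      rw [heq, rho_add X K A (r + N * k) N i]
      calc (∑ j : ↥(A \ K), (Rm X K A ^ (r + N * k)) i j * rho X K A N j)
          ≤ ∑ j : ↥(A \ K), (Rm X K A ^ (r + N * k)) i j * θ :=
            Finset.sum_le_sum fun j _ =>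
              mul_le_mul_of_nonneg_left (hθ j) (Rm_pow_nonneg X K A _ i j)
        _ = rho X K A (r + N * k) i * θ := by rw [← Finset.sum_mul]; rfl
        _ ≤ θ ^ k * θ := mul_le_mul_of_nonneg_right (IH r i) hθ0
        _ = θ ^ (k + 1) := (pow_succ θ k).symm
  have hbound : ∀ (n : ℕ) (i : ↥(A \ K)), rho X K A n i ≤ θ ^ (n / N) := by
    intro n i
    have hmod : n % N + N * (n / N) = n := Nat.mod_add_div n N
    calc rho X K A n i = rho X K A (n % N + N * (n / N)) i := by rw [hmod]
      _ ≤ θ ^ (n / N) := hkey _ _ i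
  have hblock : ∀ m : ℕ, (∑ i ∈ Finset.range (N * m), θ ^ (i / N))
      = (N : ℝ) * ∑ k ∈ Finset.range m, θ ^ k := by
    intro m
    induction m with
    | zero => simp
    | succ m IH =>
      have h1 : N * (m + 1) = N * m + N := by ring
      rw [h1, Finset.range_eq_Ico,
        ← Finset.sum_Ico_consecutive (fun i => θ ^ (i / N)) (Nat.zero_le (N * m))
          (by omega : N * m ≤ N * m + N),
        ← Finset.range_eq_Ico, IH]
      have h2 : (∑ i ∈ Finset.Ico (N * m) (N * m + N), θ ^ (i / N))
          = ∑ i ∈ Finset.Ico (N * m) (N * m + N), θ ^ m := by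
        apply Finset.sum_congr rfl
        intro i hi
        rw [Finset.mem_Ico] at hi
        congr 1
        have hc1 : m * N ≤ i := by rw [mul_comm]; exact hi.1
        have hc2 : i < (m + 1) * N := by
          have h4 : (m + 1) * N = N * m + N := by ring
          omega
        exact Nat.div_eq_of_lt_le hc1 hc2
      rw [h2, Finset.sum_const, Nat.card_Ico]
      have h3 : N * m + N - N * m = N := by omega
      rw [h3, nsmul_eq_mul, Finset.sum_range_succ]
      ring
  have hgsum : Summable fun n : ℕ => θ ^ (n / N) := by
    apply summable_of_sum_range_le (c := (N : ℝ) * (1 - θ)⁻¹) (fun n => pow_nonneg hθ0 _)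
    intro m
    calc (∑ i ∈ Finset.range m, θ ^ (i / N))
        ≤ ∑ i ∈ Finset.range (N * m), θ ^ (i / N) :=
          Finset.sum_le_sum_of_subset_of_nonneg
            (Finset.range_subset_range.2 (Nat.le_mul_of_pos_left m (by omega)))
            (fun i _ _ => pow_nonneg hθ0 _)
      _ = (N : ℝ) * ∑ k ∈ Finset.range m, θ ^ k := hblock m
      _ ≤ (N : ℝ) * (1 - θ)⁻¹ := by
          apply mul_le_mul_of_nonneg_left _ (by positivity)
          rw [← tsum_geometric_of_lt_one hθ0 hθlt]
          exact Summable.sum_le_tsum _ (fun k _ => pow_nonneg hθ0 _)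
            (summable_geometric_of_lt_one hθ0 hθlt)
  intro i j
  apply Summable.of_nonneg_of_le (fun n => Rm_pow_nonneg X K A n i j)
    (fun n => le_trans ?_ (hbound n i)) hgsum
  exact Finset.single_le_sum (fun k _ => Rm_pow_nonneg X K A n i k) (Finset.mem_univ j)

lemma neumann_inv (X : MC S) (K A : Finset S)
    (hsum : ∀ i j : ↥(A \ K), Summable fun n => (Rm X K A ^ n) i j) :
    (1 - Rm X K A) * Matrix.of (fun i j => ∑' n : ℕ, (Rm X K A ^ n) i j) = 1 := by
  have hGe : (Matrix.of (fun i j => ∑' n : ℕ, (Rm X K A ^ n) i j) : Matrix ↥(A \ K) ↥(A \ K) ℝ)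
      = 1 + Rm X K A * Matrix.of (fun i j => ∑' n : ℕ, (Rm X K A ^ n) i j) := by
    ext i j
    rw [Matrix.add_apply, Matrix.mul_apply]
    have h1 : (∑ k : ↥(A \ K), Rm X K A i k
          * (Matrix.of (fun i j => ∑' n : ℕ, (Rm X K A ^ n) i j)) k j)
        = ∑ k : ↥(A \ K), ∑' n : ℕ, Rm X K A i k * (Rm X K A ^ n) k j := by
      apply Finset.sum_congr rfl
      intro k _
      rw [Matrix.of_apply, ← tsum_mul_left]
    have h2 : (∑ k : ↥(A \ K), ∑' n : ℕ, Rm X K A i k * (Rm X K A ^ n) k j)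
        = ∑' n : ℕ, ∑ k : ↥(A \ K), Rm X K A i k * (Rm X K A ^ n) k j :=
      (Summable.tsum_finsetSum fun k _ => (hsum k j).mul_left _).symm
    have h3 : (∑' n : ℕ, ∑ k : ↥(A \ K), Rm X K A i k * (Rm X K A ^ n) k j)
        = ∑' n : ℕ, (Rm X K A ^ (n + 1)) i j := by
      apply tsum_congr
      intro n
      rw [pow_succ', Matrix.mul_apply]
    have h4 : (∑' n : ℕ, (Rm X K A ^ n) i j)
        = (Rm X K A ^ 0) i j + ∑' n : ℕ, (Rm X K A ^ (n + 1)) i j :=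
      Summable.tsum_eq_zero_add (hsum i j)
    rw [Matrix.of_apply, h4, h1, h2, h3, pow_zero]
  calc (1 - Rm X K A) * Matrix.of (fun i j => ∑' n : ℕ, (Rm X K A ^ n) i j)
      = Matrix.of (fun i j => ∑' n : ℕ, (Rm X K A ^ n) i j)
        - Rm X K A * Matrix.of (fun i j => ∑' n : ℕ, (Rm X K A ^ n) i j) := by
        rw [Matrix.sub_mul, Matrix.one_mul]
    _ = 1 := by
        nth_rewrite 1 [hGe]
        exact add_sub_cancel_right _ _

lemma tsum_mulVec_eq (X : MC S) (K A : Finset S)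
    (hsum : ∀ i j : ↥(A \ K), Summable fun n => (Rm X K A ^ n) i j)
    (w : ↥(A \ K) → ℝ) (i : ↥(A \ K)) :
    ∑' n : ℕ, ((Rm X K A ^ n).mulVec w) i
      = (Matrix.of (fun i j => ∑' n : ℕ, (Rm X K A ^ n) i j)).mulVec w i := by
  have h1 : (Matrix.of (fun i j => ∑' n : ℕ, (Rm X K A ^ n) i j)).mulVec w i
      = ∑ j : ↥(A \ K), (∑' n : ℕ, (Rm X K A ^ n) i j) * w j := rfl
  have h2 : ∀ j : ↥(A \ K), (∑' n : ℕ, (Rm X K A ^ n) i j) * w j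
      = ∑' n : ℕ, (Rm X K A ^ n) i j * w j := fun j => tsum_mul_right.symm
  rw [h1, Finset.sum_congr rfl (fun j _ => h2 j),
    ← Summable.tsum_finsetSum (fun j _ => (hsum i j).mul_right _)]
  rfl

lemma summable_mulVec (X : MC S) (K A : Finset S)
    (hsum : ∀ i j : ↥(A \ K), Summable fun n => (Rm X K A ^ n) i j)
    (w : ↥(A \ K) → ℝ) (i : ↥(A \ K)) :
    Summable fun n : ℕ => ((Rm X K A ^ n).mulVec w) i := by
  apply Summable.congr (f := fun n => ∑ j : ↥(A \ K), (Rm X K A ^ n) i j * w j)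
  · exact summable_sum fun j _ => (hsum i j).mul_right _
  · intro n
    rfl

end Aux

/-- **Matrix representation of `k̃'(x,q) = 𝔼_x[v(X_T); T < T_K]`.** Under
A1(q) with Lyapunov function `v` and constant `c`, the tail sums
`(P₁₃v₃)(x)` (`x ∈ K`) and `(P₂₃v₃)(x)` (`x ∈ A'`) are finite (summable), and
`𝔼_x[v(X_T) I(T < T_K)] = (P₁₃v₃)(x) + (P₁₂(I - P₂₂)⁻¹ P₂₃v₃)(x)` for `x ∈ K`,
while `𝔼_x[v(X_T) I(T < T_K)] = ((I - P₂₂)⁻¹ P₂₃v₃)(x)` for `x ∈ A' = A \ K`. -/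
theorem kprime_matrix_representation
    [Countable S] [MeasurableSingletonClass S]
    (X : MC S) (hirr : X.Irreducible) (hrec : X.Recurrent)
    (K A : Finset S) (hKA : K ⊆ A)
    (q v : S → ℝ) (c : ℝ) (hq : ∀ x, 0 ≤ q x)
    (hA1 : X.A1 (K : Set S) q v c) :
    (∀ x ∈ K, Summable fun y : {y : S // y ∉ A} => X.P x y.1 * v y.1)
    ∧ (∀ x ∈ A \ K, Summable fun y : {y : S // y ∉ A} => X.P x y.1 * v y.1)
    ∧ (∀ (x : S) (hx : x ∈ K),
        (∫⁻ ω, (if TA A ω < TKt K ω then ENNReal.ofReal (v (evalAt ω (TA A ω))) else 0)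
            ∂ X.μ x)
          = ENNReal.ofReal
              ((∑' y : {y : S // y ∉ A}, X.P x y.1 * v y.1)
                + (blk X.P K (A \ K) * (1 - blk X.P (A \ K) (A \ K))⁻¹).mulVec
                    (fun w : ↥(A \ K) => ∑' y : {y : S // y ∉ A}, X.P w.1 y.1 * v y.1)
                    ⟨x, hx⟩))
    ∧ ∀ (x : S) (hx : x ∈ A \ K),
        (∫⁻ ω, (if TA A ω < TKt K ω then ENNReal.ofReal (v (evalAt ω (TA A ω))) else 0)
            ∂ X.μ x)
          = ENNReal.ofReal
              ((1 - blk X.P (A \ K) (A \ K))⁻¹.mulVec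
                (fun w : ↥(A \ K) => ∑' y : {y : S // y ∉ A}, X.P w.1 y.1 * v y.1)
                ⟨x, hx⟩) := by
  obtain ⟨hv, hsum, -⟩ := hA1
  have hwnn : ∀ w : ↥(A \ K), 0 ≤ ∑' y : {y : S // y ∉ A}, X.P w.1 y.1 * v y.1 :=
    fun w => tsum_nonneg fun y => mul_nonneg (X.nonneg _ _) (hv _)
  refine ⟨fun x _ => summable_sub X A v hsum x, fun x _ => summable_sub X A v hsum x, ?_, ?_⟩
  · -- x ∈ K
    intro x hx
    by_cases hU : ∀ y : S, y ∈ A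
    · haveI : IsEmpty {y : S // y ∉ A} := ⟨fun y => y.2 (hU y.1)⟩
      have hw0 : (fun w : ↥(A \ K) => ∑' y : {y : S // y ∉ A}, X.P w.1 y.1 * v y.1)
          = fun _ => (0 : ℝ) := funext fun w => tsum_empty
      have hint : ∀ ω : ℕ → S,
          (if TA A ω < TKt K ω then ENNReal.ofReal (v (evalAt ω (TA A ω))) else 0) = 0 := by
        intro ω
        rw [if_neg]
        rw [show TA A ω = ⊤ from hit_eq_top' fun k _ hk => hk (hU (ω k))]
        exact not_top_lt
      rw [lintegral_congr hint, lintegral_zero, hw0]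
      rw [show (fun _ : ↥(A \ K) => (0 : ℝ)) = (0 : ↥(A \ K) → ℝ) from rfl, Matrix.mulVec_zero]
      rw [tsum_empty, Pi.zero_apply, add_zero, ENNReal.ofReal_zero]
    · push_neg at hU
      have hpsum := summable_pow_entry X K A hirr hU
      have hxA : x ∈ A := hKA hx
      set wre : ↥(A \ K) → ℝ :=
        fun w => ∑' y : {y : S // y ∉ A}, X.P w.1 y.1 * v y.1 with hwre
      have hvecnn : ∀ (n : ℕ) (z : ↥(A \ K)), 0 ≤ ((Rm X K A ^ n).mulVec wre) z :=
        fun n z => Finset.sum_nonneg fun j _ =>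
          mul_nonneg (Rm_pow_nonneg X K A n z j) (hwnn j)
      rw [lintegral_eq_ttsum X hKA v hxA, tsum_eq_zero_add' (f := fun n => TT X v K A n x) ENNReal.summable]
      have h0 : TT X v K A 0 x
          = ENNReal.ofReal (∑' y : {y : S // y ∉ A}, X.P x y.1 * v y.1) :=
        TT_eq_ofReal_u X v K A hv hsum 0 x
      have hstep : ∀ n : ℕ, TT X v K A (n + 1) x
          = ENNReal.ofReal (((blk X.P K (A \ K) * Rm X K A ^ n).mulVec wre) ⟨x, hx⟩) := by
        intro n
        rw [TT_eq_ofReal_u X v K A hv hsum (n + 1) x]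
        congr 1
        have h1 : uFun X v K A (n + 1) x = ∑ z ∈ A \ K, X.P x z * uFun X v K A n z := rfl
        rw [h1, ← Finset.sum_coe_sort (A \ K) (fun z => X.P x z * uFun X v K A n z)]
        have h2 : ∀ z : ↥(A \ K), X.P x z.1 * uFun X v K A n z.1
            = blk X.P K (A \ K) ⟨x, hx⟩ z * ((Rm X K A ^ n).mulVec wre) z := by
          intro z
          rw [uFun_matrix X v K A n z]
          rfl
        rw [Finset.sum_congr rfl (fun z _ => h2 z),
          show (∑ z : ↥(A \ K), blk X.P K (A \ K) ⟨x, hx⟩ z * ((Rm X K A ^ n).mulVec wre) z)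
            = (blk X.P K (A \ K)).mulVec ((Rm X K A ^ n).mulVec wre) ⟨x, hx⟩ from rfl,
          Matrix.mulVec_mulVec]
      have hsummable : Summable
          (fun n : ℕ => ((blk X.P K (A \ K) * Rm X K A ^ n).mulVec wre) ⟨x, hx⟩) := by
        apply Summable.congr (f := fun n : ℕ =>
          ∑ z : ↥(A \ K), blk X.P K (A \ K) ⟨x, hx⟩ z * ((Rm X K A ^ n).mulVec wre) z)
        · exact summable_sum fun z _ => (summable_mulVec X K A hpsum wre z).mul_left _
        · intro n
          rw [← Matrix.mulVec_mulVec]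
          rfl
      have hnn : ∀ n : ℕ, 0 ≤ ((blk X.P K (A \ K) * Rm X K A ^ n).mulVec wre) ⟨x, hx⟩ := by
        intro n
        rw [← Matrix.mulVec_mulVec]
        exact Finset.sum_nonneg fun z _ => mul_nonneg (X.nonneg _ _) (hvecnn n z)
      rw [tsum_congr hstep, h0, ← ENNReal.ofReal_tsum_of_nonneg hnn hsummable,
        ← ENNReal.ofReal_add (tsum_nonneg fun y => mul_nonneg (X.nonneg _ _) (hv _))
          (tsum_nonneg hnn)]
      congr 1
      have hswap : (∑' n : ℕ, ((blk X.P K (A \ K) * Rm X K A ^ n).mulVec wre) ⟨x, hx⟩)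
          = ((blk X.P K (A \ K) * (1 - Rm X K A)⁻¹).mulVec wre) ⟨x, hx⟩ := by
        have e1 : ∀ n : ℕ, ((blk X.P K (A \ K) * Rm X K A ^ n).mulVec wre) ⟨x, hx⟩
            = ∑ z : ↥(A \ K), blk X.P K (A \ K) ⟨x, hx⟩ z * ((Rm X K A ^ n).mulVec wre) z := by
          intro n
          rw [← Matrix.mulVec_mulVec]
          rfl
        rw [tsum_congr e1,
          Summable.tsum_finsetSum (fun z _ => (summable_mulVec X K A hpsum wre z).mul_left _)]
        have e2 : ∀ z : ↥(A \ K),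
            (∑' n : ℕ, blk X.P K (A \ K) ⟨x, hx⟩ z * ((Rm X K A ^ n).mulVec wre) z)
              = blk X.P K (A \ K) ⟨x, hx⟩ z * ((1 - Rm X K A)⁻¹.mulVec wre) z := by
          intro z
          rw [tsum_mul_left, tsum_mulVec_eq X K A hpsum wre z,
            Matrix.inv_eq_right_inv (neumann_inv X K A hpsum)]
        rw [Finset.sum_congr rfl (fun z _ => e2 z), ← Matrix.mulVec_mulVec]
        rfl
      rw [hswap]
      rfl
  · -- x ∈ A \ K
    intro x hx
    by_cases hU : ∀ y : S, y ∈ A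
    · haveI : IsEmpty {y : S // y ∉ A} := ⟨fun y => y.2 (hU y.1)⟩
      have hw0 : (fun w : ↥(A \ K) => ∑' y : {y : S // y ∉ A}, X.P w.1 y.1 * v y.1)
          = fun _ => (0 : ℝ) := funext fun w => tsum_empty
      have hint : ∀ ω : ℕ → S,
          (if TA A ω < TKt K ω then ENNReal.ofReal (v (evalAt ω (TA A ω))) else 0) = 0 := by
        intro ω
        rw [if_neg]
        rw [show TA A ω = ⊤ from hit_eq_top' fun k _ hk => hk (hU (ω k))]
        exact not_top_lt
      rw [lintegral_congr hint, lintegral_zero, hw0]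
      rw [show (fun _ : ↥(A \ K) => (0 : ℝ)) = (0 : ↥(A \ K) → ℝ) from rfl, Matrix.mulVec_zero]
      rw [Pi.zero_apply, ENNReal.ofReal_zero]
    · push_neg at hU
      have hpsum := summable_pow_entry X K A hirr hU
      have hxA : x ∈ A := (Finset.mem_sdiff.1 hx).1
      set wre : ↥(A \ K) → ℝ :=
        fun w => ∑' y : {y : S // y ∉ A}, X.P w.1 y.1 * v y.1 with hwre
      have hvecnn : ∀ (n : ℕ) (z : ↥(A \ K)), 0 ≤ ((Rm X K A ^ n).mulVec wre) z :=
        fun n z => Finset.sum_nonneg fun j _ =>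
          mul_nonneg (Rm_pow_nonneg X K A n z j) (hwnn j)
      rw [lintegral_eq_ttsum X hKA v hxA]
      have hTTeq : ∀ n : ℕ, TT X v K A n x
          = ENNReal.ofReal (((Rm X K A ^ n).mulVec wre) ⟨x, hx⟩) := by
        intro n
        rw [TT_eq_ofReal_u X v K A hv hsum n x]
        exact congrArg ENNReal.ofReal (uFun_matrix X v K A n ⟨x, hx⟩)
      rw [tsum_congr hTTeq,
        ← ENNReal.ofReal_tsum_of_nonneg (fun n => hvecnn n ⟨x, hx⟩)
          (summable_mulVec X K A hpsum wre ⟨x, hx⟩)]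
      congr 1
      rw [tsum_mulVec_eq X K A hpsum wre ⟨x, hx⟩,
        show blk X.P (A \ K) (A \ K) = Rm X K A from rfl,
        Matrix.inv_eq_right_inv (neumann_inv X K A hpsum)]


end
end

section
/- Let n be finite and let G be an entrywise nonnegative n × n real matrix such that Σ_{m=0}^∞ G^m converges (so (I − G)^{-1} exists and is entrywise nonnegative). Let f, β, ξ ∈ ℝⁿ with f ≥ 0 and ξ ≥ 0 entrywise, and suppose f ≤ β + Gf + ξ·‖f‖_∞ entrywise, where ‖·‖_∞ is the maximum-absolute-value norm. If ‖(I − G)^{-1}ξ‖_∞ < 1, then ‖f‖_∞ ≤ ‖(I − G)^{-1}β‖_∞ / (1 − ‖(I − G)^{-1}ξ‖_∞), and consequently f ≤ (I − G)^{-1}β + (I − G)^{-1}ξ · ‖(I − G)^{-1}β‖_∞ / (1 − ‖(I − G)^{-1}ξ‖_∞) entrywise. -/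
/-! Multiplying `(1 - G) f ≤ β + ‖f‖ ξ` by the entrywise nonnegative `(1 - G)⁻¹` gives
`f ≤ B + ‖f‖ X` with `B = (1 - G)⁻¹ β`, `X = (1 - G)⁻¹ ξ`. Since `f ≥ 0` and the sup norm is
solid, `‖f‖ ≤ ‖B‖ + ‖X‖ ‖f‖`, which solves for `‖f‖` because `‖X‖ < 1`; feeding this back
into `f ≤ B + ‖f‖ X` with `X ≥ 0` gives the entrywise bound. -/

instance Pi.hasSolidNorm {ι : Type*} [Fintype ι] {π : ι → Type*}
    [∀ i, NormedAddCommGroup (π i)] [∀ i, Lattice (π i)] [∀ i, HasSolidNorm (π i)] :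
    HasSolidNorm (∀ i, π i) where
  solid _ y h := pi_norm_le_iff_of_nonneg (norm_nonneg y) |>.mpr fun i =>
    (norm_le_norm_of_abs_le_abs (h i)).trans (norm_le_pi_norm y i)

section SolidNorm

variable {E : Type*} [NormedAddCommGroup E] [Lattice E] [HasSolidNorm E]
  [IsOrderedAddMonoid E]

theorem norm_le_norm_of_nonneg_of_le {a b : E} (ha : 0 ≤ a) (hab : a ≤ b) : ‖a‖ ≤ ‖b‖ :=
  norm_le_norm_of_abs_le_abs <| by rw [abs_of_nonneg ha, abs_of_nonneg (ha.trans hab)]; exact hab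

theorem norm_le_div_one_sub_of_le_add_norm_smul [NormedSpace ℝ E] {f b x : E} (hf : 0 ≤ f)
    (hfbx : f ≤ b + ‖f‖ • x) (hx : ‖x‖ < 1) : ‖f‖ ≤ ‖b‖ / (1 - ‖x‖) := by
  have hself : ‖f‖ ≤ ‖b‖ + ‖f‖ * ‖x‖ :=
    calc ‖f‖ ≤ ‖b + ‖f‖ • x‖ := norm_le_norm_of_nonneg_of_le hf hfbx
      _ ≤ ‖b‖ + ‖‖f‖ • x‖ := norm_add_le _ _
      _ = ‖b‖ + ‖f‖ * ‖x‖ := by rw [norm_smul, norm_norm]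
  rw [le_div_iff₀ (sub_pos.mpr hx)]
  linarith

end SolidNorm

namespace Matrix

variable {n R : Type*} [Fintype n] [Ring R] [PartialOrder R] [IsOrderedRing R]

theorem mulVec_mono {A : Matrix n n R} (hA : ∀ i j, 0 ≤ A i j) : Monotone (A *ᵥ ·) :=
  fun _ _ huv i => dotProduct_le_dotProduct_of_nonneg_left huv (hA i)

theorem mulVec_nonneg {A : Matrix n n R} (hA : ∀ i j, 0 ≤ A i j) {v : n → R} (hv : 0 ≤ v) :
    0 ≤ A *ᵥ v := by
  simpa using mulVec_mono hA hv

theorem le_mulVec_of_le_add_mulVec [DecidableEq n] {A G : Matrix n n R}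
    (hAG : A * (1 - G) = 1) (hA : ∀ i j, 0 ≤ A i j) {f v : n → R}
    (hf : f ≤ v + G *ᵥ f) : f ≤ A *ᵥ v := by
  have hsub : (1 - G) *ᵥ f ≤ v := by
    rw [sub_mulVec, one_mulVec]
    exact sub_le_iff_le_add.mpr hf
  calc f = A *ᵥ ((1 - G) *ᵥ f) := by rw [mulVec_mulVec, hAG, one_mulVec]
    _ ≤ A *ᵥ v := mulVec_mono hA hsub

end Matrix

open Matrix

theorem neumann_fixed_point_upper_bound_general
    {n : Type*} [Fintype n] [DecidableEq n]
    (G : Matrix n n ℝ)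
    (hunit : IsUnit (1 - G))
    (hinvpos : ∀ i j, 0 ≤ (1 - G)⁻¹ i j)
    (f β ξ : n → ℝ)
    (hf : ∀ i, 0 ≤ f i) (hξ : ∀ i, 0 ≤ ξ i)
    (hineq : ∀ i, f i ≤ β i + G.mulVec f i + ξ i * ‖f‖)
    (hcond : ‖(1 - G)⁻¹.mulVec ξ‖ < 1) :
    ‖f‖ ≤ ‖(1 - G)⁻¹.mulVec β‖ / (1 - ‖(1 - G)⁻¹.mulVec ξ‖)
    ∧ ∀ i, f i ≤ (1 - G)⁻¹.mulVec β i
        + (1 - G)⁻¹.mulVec ξ i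
          * (‖(1 - G)⁻¹.mulVec β‖ / (1 - ‖(1 - G)⁻¹.mulVec ξ‖)) := by
  set A := (1 - G)⁻¹
  have hAG : A * (1 - G) = 1 :=
    nonsing_inv_mul _ ((isUnit_iff_isUnit_det _).mp hunit)
  have hfle : f ≤ A *ᵥ β + ‖f‖ • A *ᵥ ξ := by
    rw [← mulVec_smul, ← mulVec_add]
    refine le_mulVec_of_le_add_mulVec hAG hinvpos fun i => ?_
    simpa [mul_comm, add_right_comm] using hineq i
  have hnorm := norm_le_div_one_sub_of_le_add_norm_smul hf hfle hcond
  refine ⟨hnorm, fun i => ?_⟩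
  have hXi : 0 ≤ (A *ᵥ ξ) i := mulVec_nonneg hinvpos hξ i
  calc f i ≤ (A *ᵥ β) i + (A *ᵥ ξ) i * ‖f‖ := by simpa [mul_comm] using hfle i
    _ ≤ _ := by gcongr

/-- **The fixed-point upper bound.** If `G` is an entrywise nonnegative `n × n`
real matrix whose Neumann series `Σ_m G^m` converges entrywise (so `(I - G)⁻¹`
exists and is entrywise nonnegative), `f, β, ξ ∈ ℝⁿ` with `f ≥ 0`, `ξ ≥ 0`
entrywise, `f ≤ β + Gf + ξ·‖f‖_∞` entrywise, and `‖(I - G)⁻¹ξ‖_∞ < 1`, then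
`‖f‖_∞ ≤ ‖(I - G)⁻¹β‖_∞ / (1 - ‖(I - G)⁻¹ξ‖_∞)` and consequently
`f ≤ (I - G)⁻¹β + (I - G)⁻¹ξ · ‖(I - G)⁻¹β‖_∞ / (1 - ‖(I - G)⁻¹ξ‖_∞)`
entrywise.  (For `u : n → ℝ` with `n` finite, `‖u‖ = max_i |u i|`.) -/
theorem neumann_fixed_point_upper_bound
    {n : Type*} [Fintype n] [DecidableEq n]
    (G : Matrix n n ℝ)
    (hG : ∀ i j, 0 ≤ G i j)
    (hNeumann : ∀ i j, HasSum (fun m : ℕ => (G ^ m) i j) ((1 - G)⁻¹ i j))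
    (hunit : IsUnit (1 - G))
    (hinvpos : ∀ i j, 0 ≤ (1 - G)⁻¹ i j)
    (f β ξ : n → ℝ)
    (hf : ∀ i, 0 ≤ f i) (hξ : ∀ i, 0 ≤ ξ i)
    (hineq : ∀ i, f i ≤ β i + G.mulVec f i + ξ i * ‖f‖)
    (hcond : ‖(1 - G)⁻¹.mulVec ξ‖ < 1) :
    ‖f‖ ≤ ‖(1 - G)⁻¹.mulVec β‖ / (1 - ‖(1 - G)⁻¹.mulVec ξ‖)
    ∧ ∀ i, f i ≤ (1 - G)⁻¹.mulVec β i
        + (1 - G)⁻¹.mulVec ξ i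
          * (‖(1 - G)⁻¹.mulVec β‖ / (1 - ‖(1 - G)⁻¹.mulVec ξ‖)) :=
  neumann_fixed_point_upper_bound_general G hunit hinvpos f β ξ hf hξ hineq hcond
end

section
/- Let X = ((X₁(t), X₂(t)) : t ≥ 0) be the Markov jump process on S = ℤ₊² describing two independent M/M/1 queues with arrival rates λ₁, λ₂ and service rates μ₁, μ₂ satisfying 0 < λᵢ < μᵢ, i.e., with generator (Qh)(x) = λ₁(h(x+e₁) − h(x)) + μ₁ I(x₁ > 0)(h(x−e₁) − h(x)) + λ₂(h(x+e₂) − h(x)) + μ₂ I(x₂ > 0)(h(x−e₂) − h(x)). Let s(x) = x₁ + x₂, ρᵢ = λᵢ/μᵢ, γᵢ = ρᵢ/(1 − ρᵢ), and s_c(x) = s(x) − γ₁ − γ₂. Then h*(x) = h₁(x₁) + h₂(x₂) with hᵢ(y) = (y² + y)/(2(μᵢ − λᵢ)) satisfies (Qh*)(x) = −s_c(x) for all x ∈ S, i.e., h* is the solution of Poisson's equation Qh = −s_c vanishing at (0,0). -/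
set_option autoImplicit false

noncomputable section

/-- Generator of two independent M/M/1 queues on `S = ℤ₊²`, applied to a
function `h`:
`(Qh)(x) = λ₁(h(x+e₁) - h(x)) + μ₁ I(x₁>0)(h(x-e₁) - h(x))
         + λ₂(h(x+e₂) - h(x)) + μ₂ I(x₂>0)(h(x-e₂) - h(x))`. -/
def genMM1 (lam₁ mu₁ lam₂ mu₂ : ℝ) (h : ℕ × ℕ → ℝ) (x : ℕ × ℕ) : ℝ :=
  lam₁ * (h (x.1 + 1, x.2) - h x)
    + mu₁ * (if 0 < x.1 then h (x.1 - 1, x.2) - h x else 0)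
    + lam₂ * (h (x.1, x.2 + 1) - h x)
    + mu₂ * (if 0 < x.2 then h (x.1, x.2 - 1) - h x else 0)

/-- **Poisson's equation for two independent M/M/1 queues.** With
`0 < λᵢ < μᵢ`, `s(x) = x₁ + x₂`, `ρᵢ = λᵢ/μᵢ`, `γᵢ = ρᵢ/(1-ρᵢ)` and
`s_c(x) = s(x) - γ₁ - γ₂`, the function `h*(x) = h₁(x₁) + h₂(x₂)` with
`hᵢ(y) = (y² + y)/(2(μᵢ - λᵢ))` satisfies `(Qh*)(x) = -s_c(x)` for all
`x ∈ ℤ₊²` and `h*(0,0) = 0`, i.e. `h*` is the solution of Poisson's equation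
`Qh = -s_c` vanishing at the origin. -/
theorem two_mm1_queues_poisson_solution
    (lam₁ mu₁ lam₂ mu₂ : ℝ)
    (h₁pos : 0 < lam₁) (h₂pos : 0 < lam₂)
    (h₁ : lam₁ < mu₁) (h₂ : lam₂ < mu₂)
    (hstar : ℕ × ℕ → ℝ)
    (hstar_def : ∀ x : ℕ × ℕ,
      hstar x = ((x.1 : ℝ) ^ 2 + x.1) / (2 * (mu₁ - lam₁))
              + ((x.2 : ℝ) ^ 2 + x.2) / (2 * (mu₂ - lam₂))) :
    hstar (0, 0) = 0
    ∧ ∀ x : ℕ × ℕ,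
        genMM1 lam₁ mu₁ lam₂ mu₂ hstar x
          = -(((x.1 : ℝ) + x.2)
              - (lam₁ / mu₁) / (1 - lam₁ / mu₁)
              - (lam₂ / mu₂) / (1 - lam₂ / mu₂)) := by
  have hm₁ : (0:ℝ) < mu₁ := h₁pos.trans h₁
  have hm₂ : (0:ℝ) < mu₂ := h₂pos.trans h₂
  have hc₁ : mu₁ - lam₁ ≠ 0 := by linarith
  have hc₂ : mu₂ - lam₂ ≠ 0 := by linarith
  have hg₁ : (lam₁ / mu₁) / (1 - lam₁ / mu₁) = lam₁ / (mu₁ - lam₁) := by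
    field_simp
  have hg₂ : (lam₂ / mu₂) / (1 - lam₂ / mu₂) = lam₂ / (mu₂ - lam₂) := by
    field_simp
  constructor
  · simp [hstar_def]
  · rintro ⟨a, b⟩
    rw [hg₁, hg₂]
    rcases a with _ | a <;> rcases b with _ | b <;>
      simp only [genMM1, hstar_def, Nat.add_sub_cancel, Nat.lt_irrefl,
        Nat.succ_pos, if_true, if_false, Nat.succ_sub_one, lt_self_iff_false] <;>
      push_cast <;>
      field_simp <;>
      ring

end
end
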